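/- arXiv:1904.00029 — 3 statements merged into one kernel-verified Lean document; each statement's English description precedes it below -/
import Mathlib

section
/- For ω = 2πk/N with integer k, 1 ≤ k ≤ N-1, and t̄ = (N+1)/2, the sum over t = 1 to N of (t − t̄)·sin(ωt) equals −(N/2)·cot(ω/2). -/
/-!
With `z = exp (iω)`, the sum is the imaginary part of `∑ (t - t̄) z ^ t`. Since `z` is an `N`-th
root of unity different from `1`, the geometric sum `∑ z ^ t` vanishes and the closed form of
the arithmetico-geometric sum collapses to `∑ t z ^ t = N z / (z - 1)`. Finally
`z / (z - 1) = 1/2 - (i/2) cot (ω/2)`.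
-/

open Real Finset

theorem sq_sub_one_mul_sum_Icc_mul_pow {R : Type*} [CommRing R] (z : R) (n : ℕ) :
    (z - 1) ^ 2 * ∑ t ∈ Icc 1 n, (t : R) * z ^ t
      = z - (n + 1) * z ^ (n + 1) + n * z ^ (n + 2) := by
  induction n with
  | zero => simp
  | succ n ih =>
    rw [sum_Icc_succ_top (by omega), mul_add, ih]
    push_cast
    ring

section RootOfUnity

variable {K : Type*} [Field K] {z : K} {n : ℕ}

theorem sum_Icc_pow_eq_zero_of_pow_eq_one (hz : z ^ n = 1) (hz1 : z ≠ 1) :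
    ∑ t ∈ Icc 1 n, z ^ t = 0 := by
  have hgeom := geom_sum_Ico_mul z (Nat.le_add_left 1 n)
  rw [Ico_add_one_right_eq_Icc, pow_succ, hz, one_mul, pow_one, sub_self] at hgeom
  exact (mul_eq_zero.1 hgeom).resolve_right (sub_ne_zero.2 hz1)

theorem sum_Icc_mul_pow_of_pow_eq_one (hz : z ^ n = 1) (hz1 : z ≠ 1) :
    ∑ t ∈ Icc 1 n, (t : K) * z ^ t = n * z / (z - 1) := by
  have hsub : z - 1 ≠ 0 := sub_ne_zero.2 hz1
  have h := sq_sub_one_mul_sum_Icc_mul_pow z n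
  rw [pow_succ z n, hz, one_mul, pow_add z n 2, hz, one_mul] at h
  rw [eq_div_iff hsub]
  apply mul_left_cancel₀ hsub
  linear_combination h

theorem sum_Icc_sub_mul_pow_of_pow_eq_one (hz : z ^ n = 1) (hz1 : z ≠ 1) (c : K) :
    ∑ t ∈ Icc 1 n, ((t : K) - c) * z ^ t = n * z / (z - 1) := by
  simp_rw [sub_mul, sum_sub_distrib, ← mul_sum, sum_Icc_pow_eq_zero_of_pow_eq_one hz hz1,
    sum_Icc_mul_pow_of_pow_eq_one hz hz1, mul_zero, sub_zero]

end RootOfUnity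

namespace Complex

theorem exp_mul_I_div_exp_mul_I_sub_one {θ : ℂ} (h : exp (θ * I) ≠ 1) :
    exp (θ * I) / (exp (θ * I) - 1) = 1 / 2 - I / 2 * cot (θ / 2) := by
  have hsub : exp (θ * I) - 1 ≠ 0 := sub_ne_zero.2 h
  have hsub' : 1 - exp (θ * I) ≠ 0 := sub_ne_zero.2 (Ne.symm h)
  rw [cot_eq_exp_ratio, show 2 * I * (θ / 2) = θ * I by ring]
  field_simp
  ring_nf

theorem exp_ofReal_mul_I_ne_one {θ : ℝ} (h0 : 0 < θ) (h2π : θ < 2 * π) :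
    exp (θ * I) ≠ 1 := by
  intro h
  have hcos : Real.cos θ = 1 := by rw [← exp_ofReal_mul_I_re, h, one_re]
  exact h0.ne' ((Real.cos_eq_one_iff_of_lt_of_lt (by linarith) h2π).1 hcos)

theorem sum_mul_sin_eq_im (s : Finset ℕ) (a : ℕ → ℝ) (θ : ℝ) :
    ∑ t ∈ s, a t * Real.sin (θ * t) = (∑ t ∈ s, (a t : ℂ) * exp (θ * I) ^ t).im := by
  rw [im_sum]
  refine sum_congr rfl fun t _ => ?_
  rw [← Complex.exp_nat_mul, im_ofReal_mul, ← exp_ofReal_mul_I_im]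
  push_cast
  ring_nf

end Complex

open Complex in
theorem sum_centered_time_sin (N : ℕ) (hN : 0 < N) (k : ℤ)
    (hk1 : 1 ≤ k) (hk2 : k ≤ (N : ℤ) - 1) :
    ∑ t ∈ Finset.Icc 1 N,
        ((t : ℝ) - ((N : ℝ) + 1) / 2) *
          Real.sin ((2 * Real.pi * (k : ℝ) / (N : ℝ)) * (t : ℝ))
      = -((N : ℝ) / 2) * Real.cot ((2 * Real.pi * (k : ℝ) / (N : ℝ)) / 2) := by
  set ω : ℝ := 2 * π * k / N with hω
  have hNpos : (0 : ℝ) < N := by exact_mod_cast hN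
  have hk1' : (1 : ℝ) ≤ k := by exact_mod_cast hk1
  have hk2' : (k : ℝ) ≤ N - 1 := by exact_mod_cast hk2
  have hω0 : 0 < ω := by positivity
  have hω2π : ω < 2 * π := by
    rw [hω, div_lt_iff₀ hNpos]
    nlinarith [pi_pos]
  have hzN : exp (ω * I) ^ N = 1 := by
    rw [← Complex.exp_nat_mul, hω]
    convert exp_int_mul_two_pi_mul_I k using 2
    have hN0 : (N : ℂ) ≠ 0 := by exact_mod_cast hN.ne'
    push_cast
    field_simp
  have hz1 := exp_ofReal_mul_I_ne_one hω0 hω2π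
  rw [sum_mul_sin_eq_im]
  push_cast
  rw [sum_Icc_sub_mul_pow_of_pow_eq_one hzN hz1, mul_div_assoc,
    exp_mul_I_div_exp_mul_I_sub_one hz1]
  have hcot : Complex.cot (ω / 2) = Real.cot (ω / 2) := by push_cast; rfl
  rw [hcot]
  simp [-ofReal_cot]
  ring
end

section
/- For ω = 2πk/N with integer k, 1 ≤ k ≤ N-1, and t̄ = (N+1)/2, the sum over t = 1 to N of (t − t̄)·cos(ωt) equals N/2. -/
open Real Finset

/-!
With `z = exp (2πik/N)`, a nontrivial `N`-th root of unity, the sum is the real part of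
`∑ t z^t - (N+1)/2 ∑ z^t`. The geometric sum vanishes, so the arithmetico-geometric identity
`(1 - z) ∑ t z^t = ∑ z^t - N z^(N+1)` gives `∑ t z^t = N z / (z - 1)`, and `z / (z - 1)` has real
part `1/2` because `z` lies on the unit circle.
-/

section ArithmeticoGeometricSums

variable {R : Type*} [CommRing R]

theorem one_sub_mul_sum_Icc_mul_pow (z : R) (N : ℕ) :
    (1 - z) * ∑ t ∈ Icc 1 N, (t : R) * z ^ t = ∑ t ∈ Icc 1 N, z ^ t - N * z ^ (N + 1) := by
  induction N with
  | zero => simp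
  | succ n ih =>
    rw [sum_Icc_succ_top (by omega), sum_Icc_succ_top (by omega), mul_add, ih]
    push_cast
    ring

variable [IsDomain R] {z : R} {N : ℕ}

theorem sum_Icc_pow_eq_zero (hzN : z ^ N = 1) (hz : z ≠ 1) : ∑ t ∈ Icc 1 N, z ^ t = 0 := by
  have h : (∑ t ∈ Icc 1 N, z ^ t) * (1 - z) = 0 := by
    rw [← Ico_add_one_right_eq_Icc, geom_sum_Ico_mul_neg z (by omega), pow_one, pow_succ, hzN,
      one_mul, sub_self]
  exact (mul_eq_zero.mp h).resolve_right (sub_ne_zero.mpr hz.symm)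

end ArithmeticoGeometricSums

theorem sum_Icc_mul_pow_eq {K : Type*} [Field K] {z : K} {N : ℕ} (hzN : z ^ N = 1) (hz : z ≠ 1) :
    ∑ t ∈ Icc 1 N, (t : K) * z ^ t = N * z / (z - 1) := by
  have h := one_sub_mul_sum_Icc_mul_pow z N
  rw [sum_Icc_pow_eq_zero hzN hz, pow_succ', hzN] at h
  rw [eq_div_iff (sub_ne_zero.mpr hz)]
  linear_combination -h

theorem Complex.re_div_sub_one_of_norm_eq_one {z : ℂ} (hz1 : ‖z‖ = 1) (hz : z ≠ 1) :
    (z / (z - 1)).re = 1 / 2 := by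
  have hsq : z.re ^ 2 + z.im ^ 2 = 1 := by
    have h := Complex.normSq_eq_norm_sq z
    rw [hz1, Complex.normSq_apply] at h
    linear_combination h
  have hre : z.re ≠ 1 := by
    intro h
    exact hz (Complex.ext h (by simpa [h] using hsq))
  have hD : Complex.normSq (z - 1) = 2 * (1 - z.re) := by
    simp only [Complex.normSq_apply, Complex.sub_re, Complex.sub_im, Complex.one_re,
      Complex.one_im]
    linear_combination hsq
  have hD0 : 2 * (1 - z.re) ≠ 0 := mul_ne_zero two_ne_zero (sub_ne_zero.mpr (Ne.symm hre))
  rw [Complex.div_re, hD]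
  field_simp
  simp only [Complex.sub_re, Complex.sub_im, Complex.one_re, Complex.one_im]
  linear_combination hsq

theorem Complex.sum_Icc_centered_mul_re_pow {z : ℂ} {N : ℕ} (hzN : z ^ N = 1) (hN : N ≠ 0)
    (hz : z ≠ 1) :
    ∑ t ∈ Icc 1 N, ((t : ℝ) - ((N : ℝ) + 1) / 2) * (z ^ t).re = (N : ℝ) / 2 := by
  calc ∑ t ∈ Icc 1 N, ((t : ℝ) - ((N : ℝ) + 1) / 2) * (z ^ t).re
      = (∑ t ∈ Icc 1 N, (t : ℂ) * z ^ t).re - ((N : ℝ) + 1) / 2 * (∑ t ∈ Icc 1 N, z ^ t).re := by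
        simp only [Complex.re_sum, mul_sum, ← sum_sub_distrib, Complex.mul_re, Complex.natCast_re,
          Complex.natCast_im, zero_mul, sub_zero, sub_mul]
    _ = N * (z / (z - 1)).re := by
        simp only [sum_Icc_mul_pow_eq hzN hz, sum_Icc_pow_eq_zero hzN hz, mul_div_assoc,
          Complex.mul_re, Complex.natCast_re, Complex.natCast_im, Complex.zero_re, zero_mul,
          mul_zero, sub_zero]
    _ = (N : ℝ) / 2 := by
        rw [Complex.re_div_sub_one_of_norm_eq_one (Complex.norm_eq_one_of_pow_eq_one hzN hN) hz]
        ring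

theorem Real.cos_two_pi_mul_div_mul_eq_re_pow (k N t : ℕ) :
    Real.cos (2 * π * k / N * t) = ((Complex.exp (2 * π * Complex.I / N) ^ k) ^ t).re := by
  rw [← pow_mul, ← Complex.exp_nat_mul, ← Complex.exp_ofReal_mul_I_re]
  congr 2
  push_cast
  ring

theorem sum_centered_time_cos_general (N : ℕ) (k : ℤ)
    (hk1 : 1 ≤ k) (hk2 : k ≤ (N : ℤ) - 1) :
    ∑ t ∈ Finset.Icc 1 N,
        ((t : ℝ) - ((N : ℝ) + 1) / 2) *
          Real.cos ((2 * Real.pi * (k : ℝ) / (N : ℝ)) * (t : ℝ))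
      = (N : ℝ) / 2 := by
  lift k to ℕ using by omega
  have hN : N ≠ 0 := by omega
  have hζ := Complex.isPrimitiveRoot_exp N hN
  have hzN : (Complex.exp (2 * π * Complex.I / N) ^ k) ^ N = 1 := by
    rw [pow_right_comm, hζ.pow_eq_one, one_pow]
  have hz : Complex.exp (2 * π * Complex.I / N) ^ k ≠ 1 :=
    hζ.pow_ne_one_of_pos_of_lt (by omega) (by omega)
  simp only [Int.cast_natCast, Real.cos_two_pi_mul_div_mul_eq_re_pow]
  exact Complex.sum_Icc_centered_mul_re_pow hzN hN hz

theorem sum_centered_time_cos (N : ℕ) (hN : 0 < N) (k : ℤ)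
    (hk1 : 1 ≤ k) (hk2 : k ≤ (N : ℤ) - 1) :
    ∑ t ∈ Finset.Icc 1 N,
        ((t : ℝ) - ((N : ℝ) + 1) / 2) *
          Real.cos ((2 * Real.pi * (k : ℝ) / (N : ℝ)) * (t : ℝ))
      = (N : ℝ) / 2 :=
  sum_centered_time_cos_general N k hk1 hk2
end

section
/- For ω = 2πk/N with 1 ≤ k ≤ N-1, one has the closed form Σ_{t=1}^{N} t·sin(ωt) = −(N/2)·cot(ω/2) and Σ_{t=1}^{N} t·cos(ωt) = N/2 directly (without centering), since Σ_t sin(ωt) = Σ_t cos(ωt) = 0. -/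
open Real Finset

/-! With `z = exp (ω i)` we have `z ^ N = 1` and `z ≠ 1`, so the geometric sum over a full period
vanishes and multiplying `∑ t z^t` by `z - 1` telescopes to `∑ t z^t = N z / (z - 1)`.
Writing `z = exp (2θ i)` with `θ = ω / 2`, we get `z - 1 = 2i sin θ · exp (θ i)`, hence
`z / (z - 1) = 1/2 - (cot θ / 2) i`; the two sums are the real and imaginary parts. -/

section GeometricSums

variable {R : Type*} [CommRing R] (z : R)

theorem sub_one_mul_sum_Icc_pow (n : ℕ) :
    (z - 1) * ∑ t ∈ Icc 1 n, z ^ t = z ^ (n + 1) - z := by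
  induction n with
  | zero => simp
  | succ n ih =>
    rw [sum_Icc_succ_top (by omega), mul_add, ih]
    ring

theorem sub_one_mul_sum_Icc_natCast_mul_pow (n : ℕ) :
    (z - 1) * ∑ t ∈ Icc 1 n, (t : R) * z ^ t = n * z ^ (n + 1) - ∑ t ∈ Icc 1 n, z ^ t := by
  induction n with
  | zero => simp
  | succ n ih =>
    rw [sum_Icc_succ_top (by omega), sum_Icc_succ_top (by omega), mul_add, ih]
    push_cast
    ring

end GeometricSums

theorem sum_Icc_natCast_mul_pow_of_pow_eq_one {K : Type*} [Field K] {z : K} {N : ℕ}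
    (hzN : z ^ N = 1) (hz : z ≠ 1) :
    ∑ t ∈ Icc 1 N, (t : K) * z ^ t = N * (z / (z - 1)) := by
  have hz_sub : z - 1 ≠ 0 := sub_ne_zero.mpr hz
  have hgeom : ∑ t ∈ Icc 1 N, z ^ t = 0 := by
    have h := sub_one_mul_sum_Icc_pow z N
    rwa [pow_succ, hzN, one_mul, sub_self, mul_eq_zero, or_iff_right hz_sub] at h
  rw [mul_div_assoc', eq_div_iff hz_sub, mul_comm, sub_one_mul_sum_Icc_natCast_mul_pow, hgeom,
    pow_succ, hzN]
  ring

namespace Complex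

theorem exp_two_mul_mul_I_sub_one (θ : ℂ) :
    exp (2 * θ * I) - 1 = 2 * sin θ * I * exp (θ * I) := by
  rw [two_sin, show 2 * θ * I = θ * I + θ * I by ring, exp_add]
  have hinv : exp (-θ * I) * exp (θ * I) = 1 := by rw [← exp_add]; ring_nf; exact exp_zero
  linear_combination (exp (θ * I) ^ 2 - exp (-θ * I) * exp (θ * I)) * I_sq + hinv

theorem exp_two_mul_mul_I_ne_one {θ : ℂ} (h : sin θ ≠ 0) : exp (2 * θ * I) ≠ 1 := by
  rw [← sub_ne_zero, exp_two_mul_mul_I_sub_one]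
  exact mul_ne_zero (mul_ne_zero (mul_ne_zero two_ne_zero h) I_ne_zero) (exp_ne_zero _)

theorem exp_two_mul_mul_I_div_sub_one {θ : ℂ} (h : sin θ ≠ 0) :
    exp (2 * θ * I) / (exp (2 * θ * I) - 1) = 1 / 2 - cot θ / 2 * I := by
  rw [exp_two_mul_mul_I_sub_one, show 2 * θ * I = θ * I + θ * I by ring, exp_add,
    cot_eq_cos_div_sin, exp_mul_I]
  field_simp
  linear_combination cos θ * I_sq


theorem re_sum_natCast_mul_exp_mul_I_pow (s : Finset ℕ) (ω : ℝ) :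
    (∑ t ∈ s, (t : ℂ) * exp (ω * I) ^ t).re = ∑ t ∈ s, (t : ℝ) * Real.cos (ω * t) := by
  rw [re_sum]
  refine sum_congr rfl fun t _ => ?_
  rw [← exp_nat_mul, show (t : ℂ) * (ω * I) = ((ω * t : ℝ) : ℂ) * I by push_cast; ring,
    ← ofReal_natCast, re_ofReal_mul, exp_ofReal_mul_I_re]

theorem im_sum_natCast_mul_exp_mul_I_pow (s : Finset ℕ) (ω : ℝ) :
    (∑ t ∈ s, (t : ℂ) * exp (ω * I) ^ t).im = ∑ t ∈ s, (t : ℝ) * Real.sin (ω * t) := by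
  rw [im_sum]
  refine sum_congr rfl fun t _ => ?_
  rw [← exp_nat_mul, show (t : ℂ) * (ω * I) = ((ω * t : ℝ) : ℂ) * I by push_cast; ring,
    ← ofReal_natCast, im_ofReal_mul, exp_ofReal_mul_I_im]

end Complex

open Complex in
theorem sum_time_sin_cos_general (N : ℕ) (k : ℤ)
    (hk1 : 1 ≤ k) (hk2 : k ≤ (N : ℤ) - 1) :
    (∑ t ∈ Finset.Icc 1 N,
        (t : ℝ) * Real.sin ((2 * Real.pi * (k : ℝ) / (N : ℝ)) * (t : ℝ))
      = -((N : ℝ) / 2) * Real.cot ((2 * Real.pi * (k : ℝ) / (N : ℝ)) / 2))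
    ∧ (∑ t ∈ Finset.Icc 1 N,
        (t : ℝ) * Real.cos ((2 * Real.pi * (k : ℝ) / (N : ℝ)) * (t : ℝ))
      = (N : ℝ) / 2) := by
  set ω : ℝ := 2 * π * k / N
  have hk0 : (0 : ℝ) < k := by exact_mod_cast hk1
  have hkN : (k : ℝ) < N := by exact_mod_cast (by omega : k < N)
  have hN : (0 : ℝ) < N := hk0.trans hkN
  have hsin : Real.sin (ω / 2) ≠ 0 := by
    rw [show ω / 2 = π * (k / N) by ring]
    exact (Real.sin_pos_of_pos_of_lt_pi (mul_pos pi_pos (div_pos hk0 hN))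
      (mul_lt_of_lt_one_right pi_pos ((div_lt_one hN).mpr hkN))).ne'
  have hsin' : Complex.sin (ω / 2 : ℝ) ≠ 0 := by rw [← ofReal_sin]; exact_mod_cast hsin
  have hz : exp (ω * I) = exp (2 * (ω / 2 : ℝ) * I) := by push_cast; ring_nf
  have hzN : exp (ω * I) ^ N = 1 := by
    rw [← Complex.exp_nat_mul, show (N : ℂ) * (ω * I) = k * (2 * π * I) by
      simp only [ω]; push_cast; field_simp [show (N : ℂ) ≠ 0 by exact_mod_cast hN.ne']]
    exact exp_int_mul_two_pi_mul_I k
  have hz1 : exp (ω * I) ≠ 1 := hz ▸ exp_two_mul_mul_I_ne_one hsin'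
  have hsum :
      ∑ t ∈ Icc 1 N, (t : ℂ) * exp (ω * I) ^ t = ⟨N / 2, -(N / 2) * Real.cot (ω / 2)⟩ := by
    rw [sum_Icc_natCast_mul_pow_of_pow_eq_one hzN hz1, hz, exp_two_mul_mul_I_div_sub_one hsin',
      ← ofReal_cot]
    apply Complex.ext <;> simp [-ofReal_cot] <;> ring
  rw [← im_sum_natCast_mul_exp_mul_I_pow, ← re_sum_natCast_mul_exp_mul_I_pow, hsum]
  exact ⟨rfl, rfl⟩

theorem sum_time_sin_cos (N : ℕ) (hN : 0 < N) (k : ℤ)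
    (hk1 : 1 ≤ k) (hk2 : k ≤ (N : ℤ) - 1) :
    (∑ t ∈ Finset.Icc 1 N,
        (t : ℝ) * Real.sin ((2 * Real.pi * (k : ℝ) / (N : ℝ)) * (t : ℝ))
      = -((N : ℝ) / 2) * Real.cot ((2 * Real.pi * (k : ℝ) / (N : ℝ)) / 2))
    ∧ (∑ t ∈ Finset.Icc 1 N,
        (t : ℝ) * Real.cos ((2 * Real.pi * (k : ℝ) / (N : ℝ)) * (t : ℝ))
      = (N : ℝ) / 2) :=
  sum_time_sin_cos_general N k hk1 hk2
end
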